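/- Let ν ∈ (0,1) and 0 < ε < 1. There exists a constant C > 0 such that for all real a, b, the integral over ℝ of dξ/(|ξ|^ν · ⟨ξ-a⟩ · ⟨ξ-b⟩) is at most C/⟨b-a⟩^{1-ε}. -/

import Mathlib

/-!
Put `D = ⟨b - a⟩`. The bracket is subadditive, so `D ≤ ⟨ξ - a⟩ + ⟨ξ - b⟩`, and therefore
`1 / (⟨ξ - a⟩⟨ξ - b⟩) = (⟨ξ - a⟩⁻¹ + ⟨ξ - b⟩⁻¹) / (⟨ξ - a⟩ + ⟨ξ - b⟩) ≤ (⟨ξ - a⟩⁻¹ + ⟨ξ - b⟩⁻¹) / D`.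
It remains to bound `∫ |ξ|^{-ν} ⟨ξ - c⟩⁻¹ dξ` uniformly in `c`. On `|ξ| < 1` the factor
`|ξ|^{-ν}` is integrable because `ν < 1`. On `|ξ| ≥ 1`, Young's inequality with the exponents
`2/ν` and `2/(2 - ν)` gives `|ξ|^{-ν} ⟨ξ - c⟩⁻¹ ≤ |ξ|^{-2} + ⟨ξ - c⟩^{-2/(2-ν)}`. Both terms are
integrable, the second because `ν > 0`, and the integral of the second does not depend on `c`.
Altogether the integral is at most `C / ⟨b - a⟩ ≤ C / ⟨b - a⟩^{1-ε}`.
-/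

/-- The Japanese bracket `⟨x⟩ = (1 + x²)^{1/2}`. -/
noncomputable def jb (x : ℝ) : ℝ := Real.sqrt (1 + x ^ 2)

open MeasureTheory Real Set

lemma jb_pos (x : ℝ) : 0 < jb x := sqrt_pos.2 (by positivity)

lemma one_le_jb (x : ℝ) : 1 ≤ jb x := one_le_sqrt.2 (le_add_of_nonneg_right (sq_nonneg x))

lemma sq_jb (x : ℝ) : jb x ^ 2 = 1 + x ^ 2 := sq_sqrt (by positivity)

lemma abs_le_jb (x : ℝ) : |x| ≤ jb x := by
  rw [jb, ← sqrt_sq_eq_abs]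
  exact sqrt_le_sqrt (by linarith)

lemma jb_neg (x : ℝ) : jb (-x) = jb x := by simp [jb]

lemma jb_add_le (x y : ℝ) : jb (x + y) ≤ jb x + jb y := by
  have hxy : x * y ≤ jb x * jb y := by
    refine (le_abs_self _).trans ?_
    rw [abs_mul]
    exact mul_le_mul (abs_le_jb x) (abs_le_jb y) (abs_nonneg y) (jb_pos x).le
  rw [jb, sqrt_le_iff]
  constructor
  · exact add_nonneg (jb_pos x).le (jb_pos y).le
  · nlinarith [sq_jb x, sq_jb y]

lemma jb_sub_le_add (ξ a b : ℝ) : jb (b - a) ≤ jb (ξ - a) + jb (ξ - b) :=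
  calc jb (b - a) = jb ((ξ - a) + -(ξ - b)) := by ring_nf
    _ ≤ jb (ξ - a) + jb (-(ξ - b)) := jb_add_le _ _
    _ = jb (ξ - a) + jb (ξ - b) := by rw [jb_neg]

lemma one_div_mul_mul_le {X A B D : ℝ} (hX : 0 ≤ X) (hA : 0 < A) (hB : 0 < B) (hD : 0 < D)
    (h : D ≤ A + B) : 1 / (X * A * B) ≤ (1 / (X * A) + 1 / (X * B)) / D := by
  have key : 1 / (X * A * B) = (1 / (X * A) + 1 / (X * B)) / (A + B) := by
    rcases hX.eq_or_lt with rfl | hX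
    · simp
    · field_simp
      ring
  rw [key]
  gcongr

lemma mul_le_rpow_add_rpow {a b p q : ℝ} (ha : 0 ≤ a) (hb : 0 ≤ b) (hpq : p.HolderConjugate q) :
    a * b ≤ a ^ p + b ^ q := by
  have hp := div_le_self (rpow_nonneg ha p) hpq.lt.le
  have hq := div_le_self (rpow_nonneg hb q) hpq.symm.lt.le
  linarith [young_inequality_of_nonneg ha hb hpq]

lemma rpow_neg_mul_inv_le {ν x y : ℝ} (hν0 : 0 < ν) (hν2 : ν < 2) (hx : 0 ≤ x) (hy : 0 ≤ y) :
    x ^ (-ν) * y⁻¹ ≤ x ^ (-2 : ℝ) + y ^ (-(2 / (2 - ν))) := by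
  have h2ν : 0 < 2 - ν := by linarith
  have hpq : (2 / ν).HolderConjugate (2 / (2 - ν)) :=
    holderConjugate_iff.2 ⟨(one_lt_div hν0).2 hν2, by field_simp; ring⟩
  calc x ^ (-ν) * y⁻¹ ≤ (x ^ (-ν)) ^ (2 / ν) + y⁻¹ ^ (2 / (2 - ν)) :=
        mul_le_rpow_add_rpow (rpow_nonneg hx _) (inv_nonneg.2 hy) hpq
    _ = x ^ (-2 : ℝ) + y ^ (-(2 / (2 - ν))) := by
        rw [← rpow_mul hx, inv_rpow hy, ← rpow_neg hy]
        congr 2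
        field_simp

lemma abs_rpow_neg_two_le_two_mul_jb {ξ : ℝ} (hξ : 1 ≤ |ξ|) :
    |ξ| ^ (-2 : ℝ) ≤ 2 * jb ξ ^ (-2 : ℝ) := by
  have hξ2 : 1 ≤ ξ ^ 2 := one_le_sq_iff_one_le_abs ξ |>.2 hξ
  rw [rpow_neg (abs_nonneg ξ), rpow_neg (jb_pos ξ).le, rpow_two, rpow_two, sq_abs, sq_jb,
    ← div_eq_mul_inv, inv_le_iff_one_le_mul₀ (by positivity)]
  field_simp
  linarith

lemma integrable_jb_rpow_neg {r : ℝ} (hr : 1 < r) : Integrable fun x : ℝ => jb x ^ (-r) := by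
  refine (integrable_rpow_neg_one_add_norm_sq (E := ℝ) (r := r) (by simpa using hr)).congr
    (ae_of_all _ fun x => ?_)
  simp only [jb, sqrt_eq_rpow, norm_eq_abs, sq_abs]
  rw [← rpow_mul (by positivity)]
  ring_nf

/-- The part of the majorant of `|ξ|^{-ν} ⟨ξ - c⟩⁻¹` that does not depend on `c`. -/
noncomputable def singularMajorant (ν ξ : ℝ) : ℝ :=
  (Metric.ball 0 1).indicator (fun t => |t| ^ (-ν)) ξ + 2 * jb ξ ^ (-2 : ℝ)

lemma integrable_singularMajorant {ν : ℝ} (hν : ν < 1) : Integrable (singularMajorant ν) := by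
  refine Integrable.add ?_ ((integrable_jb_rpow_neg one_lt_two).const_mul 2)
  rw [integrable_indicator_iff measurableSet_ball]
  refine integrableOn_ball_of_norm_le_rpow (C := 1) (by simp) (by simpa using hν)
    (ae_of_all _ fun x => ?_)
    (by fun_prop : Measurable fun t : ℝ => |t| ^ (-ν)).aestronglyMeasurable
  rw [norm_of_nonneg (rpow_nonneg (abs_nonneg x) _), one_mul, norm_eq_abs]

lemma one_div_abs_rpow_mul_jb_le {ν : ℝ} (hν0 : 0 < ν) (hν2 : ν < 2) (c ξ : ℝ) :
    1 / (|ξ| ^ ν * jb (ξ - c)) ≤ singularMajorant ν ξ + jb (ξ - c) ^ (-(2 / (2 - ν))) := by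
  have hJ := jb_pos (ξ - c)
  have h1 : 0 ≤ (Metric.ball 0 1).indicator (fun t => |t| ^ (-ν)) ξ :=
    indicator_nonneg (fun t _ => rpow_nonneg (abs_nonneg t) _) ξ
  have h2 : 0 ≤ jb ξ ^ (-2 : ℝ) := rpow_nonneg (jb_pos ξ).le _
  have h3 : 0 ≤ jb (ξ - c) ^ (-(2 / (2 - ν))) := rpow_nonneg hJ.le _
  rw [one_div, mul_inv, ← rpow_neg (abs_nonneg ξ), singularMajorant]
  rcases lt_or_ge |ξ| 1 with hξ | hξ
  · have hmem : ξ ∈ Metric.ball (0 : ℝ) 1 := by simpa using hξ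
    have : |ξ| ^ (-ν) * (jb (ξ - c))⁻¹ ≤ |ξ| ^ (-ν) :=
      mul_le_of_le_one_right (rpow_nonneg (abs_nonneg ξ) _) (inv_le_one_of_one_le₀ (one_le_jb _))
    rw [indicator_of_mem hmem]
    linarith
  · have := rpow_neg_mul_inv_le hν0 hν2 (abs_nonneg ξ) hJ.le
    linarith [abs_rpow_neg_two_le_two_mul_jb hξ]

section

variable {ν : ℝ} (hν0 : 0 < ν) (hν1 : ν < 1)
include hν0 hν1

lemma integrable_one_div_abs_rpow_mul_jb (c : ℝ) :
    Integrable fun ξ => 1 / (|ξ| ^ ν * jb (ξ - c)) := by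
  have hq : 1 < 2 / (2 - ν) := (one_lt_div (by linarith)).2 (by linarith)
  refine ((integrable_singularMajorant hν1).add
    ((integrable_jb_rpow_neg hq).comp_sub_right c)).mono' (by unfold jb; fun_prop : Measurable _).aestronglyMeasurable
    (ae_of_all _ fun ξ => ?_)
  have := jb_pos (ξ - c)
  rw [norm_of_nonneg (by positivity)]
  exact one_div_abs_rpow_mul_jb_le hν0 (by linarith) c ξ

lemma integral_one_div_abs_rpow_mul_jb_le (c : ℝ) :
    ∫ ξ, 1 / (|ξ| ^ ν * jb (ξ - c)) ≤
      (∫ ξ, singularMajorant ν ξ) + ∫ ξ, jb ξ ^ (-(2 / (2 - ν))) := by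
  have hq : 1 < 2 / (2 - ν) := (one_lt_div (by linarith)).2 (by linarith)
  have hc := (integrable_jb_rpow_neg hq).comp_sub_right c
  rw [← integral_sub_right_eq_self (fun ξ => jb ξ ^ (-(2 / (2 - ν)))) c, ← integral_add (integrable_singularMajorant hν1) hc]
  refine integral_mono_of_nonneg (ae_of_all _ fun ξ => ?_)
    ((integrable_singularMajorant hν1).add hc)
    (ae_of_all _ (one_div_abs_rpow_mul_jb_le hν0 (by linarith) c))
  have := jb_pos (ξ - c)
  positivity

end

theorem integral_singular_bracket_le'_general (ν ε : ℝ) (hν0 : 0 < ν) (hν1 : ν < 1)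
    (hε0 : 0 < ε) :
    ∃ C > 0, ∀ a b : ℝ,
      (∫ ξ : ℝ, 1 / (|ξ| ^ ν * jb (ξ - a) * jb (ξ - b)))
        ≤ C / jb (b - a) ^ (1 - ε) := by
  set K := (∫ ξ, singularMajorant ν ξ) + ∫ ξ, jb ξ ^ (-(2 / (2 - ν)))
  refine ⟨2 * max K 1, by positivity, fun a b => ?_⟩
  have hF := integrable_one_div_abs_rpow_mul_jb hν0 hν1
  have hD := jb_pos (b - a)
  calc (∫ ξ, 1 / (|ξ| ^ ν * jb (ξ - a) * jb (ξ - b)))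
      ≤ ∫ ξ, (1 / (|ξ| ^ ν * jb (ξ - a)) + 1 / (|ξ| ^ ν * jb (ξ - b))) / jb (b - a) := by
        refine integral_mono_of_nonneg (ae_of_all _ fun ξ => ?_)
          (((hF a).add (hF b)).div_const _) (ae_of_all _ fun ξ => ?_)
        · have := jb_pos (ξ - a)
          have := jb_pos (ξ - b)
          positivity
        · exact one_div_mul_mul_le (rpow_nonneg (abs_nonneg ξ) ν) (jb_pos _) (jb_pos _) hD
            (jb_sub_le_add ξ a b)
    _ = ((∫ ξ, 1 / (|ξ| ^ ν * jb (ξ - a))) + ∫ ξ, 1 / (|ξ| ^ ν * jb (ξ - b))) / jb (b - a) := by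
        rw [integral_div, integral_add (hF a) (hF b)]
    _ ≤ 2 * max K 1 / jb (b - a) := by
        gcongr
        linarith [integral_one_div_abs_rpow_mul_jb_le hν0 hν1 a,
          integral_one_div_abs_rpow_mul_jb_le hν0 hν1 b, le_max_left K 1]
    _ ≤ 2 * max K 1 / jb (b - a) ^ (1 - ε) := by
        gcongr
        calc jb (b - a) ^ (1 - ε) ≤ jb (b - a) ^ (1 : ℝ) :=
              rpow_le_rpow_of_exponent_le (one_le_jb _) (by linarith)
          _ = jb (b - a) := rpow_one _

/-- Lemma on integrals with a singularity at the origin: for `ν ∈ (0,1)` and `0 < ε < 1`,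
for all `a, b ∈ ℝ`, `∫_ℝ |ξ|^{-ν} ⟨ξ-a⟩^{-1} ⟨ξ-b⟩^{-1} dξ ≲ ⟨b-a⟩^{-(1-ε)}`. -/
theorem integral_singular_bracket_le' (ν ε : ℝ) (hν0 : 0 < ν) (hν1 : ν < 1)
    (hε0 : 0 < ε) (hε1 : ε < 1) :
    ∃ C > 0, ∀ a b : ℝ,
      (∫ ξ : ℝ, 1 / (|ξ| ^ ν * jb (ξ - a) * jb (ξ - b)))
        ≤ C / jb (b - a) ^ (1 - ε) :=
  integral_singular_bracket_le'_general ν ε hν0 hν1 hε0
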